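/- arXiv:2205.14805 — 2 statements merged into one kernel-verified Lean document; each statement's English description precedes it below -/
import Mathlib

section
/- (Dobinski-like formula) For every nonnegative integer n, positive integer m, nonzero real λ > 0 and real x, the λ-analogue of the Dowling polynomial satisfies d_{m,λ}(n,x) = e^{−x/(λm)} Σ_{k=0}^∞ [x^k / (k! m^k λ^k)] (λmk + 1)^n, where the series converges absolutely. -/
/-!
Since `(λk)_{j,λ} = λʲ k(k-1)⋯(k-j+1)`, expanding `(λmk+1)ⁿ = (m·(λk)+1)ⁿ` in the
falling-factorial basis writes the `k`-th Dobinski term as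
`∑ⱼ W(n,j) (λm)ʲ · yᵏ/k! · k(k-1)⋯(k-j+1)` with `y = x/(λm)`. Summing over `k` term by
term uses the factorial moments `∑ₖ yᵏ/k! · k(k-1)⋯(k-j+1) = yʲ eʸ` of the exponential
series, and `(λm)ʲ yʲ = xʲ` turns the result into `eʸ d_{m,λ}(n,x)`.
-/

open Finset PowerSeries

/-- Generalized falling factorial `(x)_{n,λ}`. -/
def ffact (l x : ℝ) : ℕ → ℝ
  | 0 => 1
  | n + 1 => ffact l x n * (x - n * l)

theorem ffact_mul_left (l y : ℝ) : ∀ j : ℕ, ffact l (l * y) j = l ^ j * ffact 1 y j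
  | 0 => by simp [ffact]
  | j + 1 => by rw [ffact, ffact, ffact_mul_left l y j]; ring

theorem ffact_one_eq_descPochhammer_eval (y : ℝ) :
    ∀ j : ℕ, ffact 1 y j = (descPochhammer ℝ j).eval y
  | 0 => by simp [ffact]
  | j + 1 => by rw [ffact, descPochhammer_succ_eval, ffact_one_eq_descPochhammer_eval y j, mul_one]

theorem ffact_mul_natCast (l : ℝ) (k j : ℕ) :
    ffact l (l * k) j = l ^ j * k.descFactorial j := by
  rw [ffact_mul_left, ffact_one_eq_descPochhammer_eval, descPochhammer_eval_eq_descFactorial]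

theorem hasSum_pow_div_factorial_mul_descFactorial (y : ℝ) (j : ℕ) :
    HasSum (fun k : ℕ => y ^ k / k.factorial * k.descFactorial j) (y ^ j * Real.exp y) := by
  rw [← hasSum_nat_add_iff' j]
  have hvanish : ∑ i ∈ range j, y ^ i / i.factorial * (i.descFactorial j : ℝ) = 0 :=
    sum_eq_zero fun i hi => by
      rw [Nat.descFactorial_of_lt (mem_range.1 hi), Nat.cast_zero, mul_zero]
  have hshift : ∀ i : ℕ, y ^ (i + j) / (i + j).factorial * ((i + j).descFactorial j : ℝ) =
      y ^ j * (y ^ i / i.factorial) := fun i => by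
    have h : ((i + j).factorial : ℝ) = i.factorial * (i + j).descFactorial j := by
      have := Nat.factorial_mul_descFactorial (Nat.le_add_left j i)
      rw [Nat.add_sub_cancel] at this
      exact_mod_cast this.symm
    rw [h, pow_add]
    field_simp
  simp only [hvanish, sub_zero, hshift]
  rw [Real.exp_eq_exp_ℝ]
  exact (NormedSpace.expSeries_div_hasSum_exp y).mul_left (y ^ j)

/-- Theorem 11 (Dobinski-like formula):
`d_{m,λ}(n,x) = e^{-x/(λm)} ∑_{k=0}^∞ xᵏ/(k! mᵏ λᵏ) (λmk+1)ⁿ`, the series converging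
absolutely. -/
theorem stmt10 (l : ℝ) (hl : 0 < l) (m : ℕ) (hm : 0 < m) (W : ℕ → ℕ → ℝ)
    (hW : ∀ (n : ℕ) (x : ℝ),
      ((m : ℝ) * x + 1) ^ n = ∑ k ∈ range (n + 1), W n k * (m : ℝ) ^ k * ffact l x k)
    (d : ℕ → ℝ → ℝ)
    (hd : ∀ (n : ℕ) (x : ℝ), d n x = ∑ k ∈ range (n + 1), W n k * x ^ k)
    (n : ℕ) (x : ℝ) :
    Summable (fun k : ℕ =>
      |x ^ k / (k.factorial * (m : ℝ) ^ k * l ^ k) * (l * m * k + 1) ^ n|) ∧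
    d n x = Real.exp (-(x / (l * m))) *
      ∑' k : ℕ, x ^ k / (k.factorial * (m : ℝ) ^ k * l ^ k) * (l * m * k + 1) ^ n := by
  have hlm : l * m ≠ 0 := mul_ne_zero hl.ne' (Nat.cast_ne_zero.2 hm.ne')
  set y := x / (l * m) with hy
  have hterm : ∀ k : ℕ, x ^ k / (k.factorial * (m : ℝ) ^ k * l ^ k) * (l * m * k + 1) ^ n =
      ∑ j ∈ range (n + 1), W n j * (l * m) ^ j * (y ^ k / k.factorial * k.descFactorial j) :=
    fun k => by
      rw [show (l * m * k + 1 : ℝ) = m * (l * k) + 1 by ring, hW, mul_sum]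
      refine sum_congr rfl fun j _ => ?_
      rw [ffact_mul_natCast, hy, div_pow, mul_pow]
      field_simp
      ring
  have hsum : HasSum
      (fun k : ℕ => x ^ k / (k.factorial * (m : ℝ) ^ k * l ^ k) * (l * m * k + 1) ^ n)
      (Real.exp y * d n x) := by
    simp only [hterm, hd, mul_sum]
    refine hasSum_sum fun j _ => ?_
    have hcoeff : W n j * (l * m) ^ j * (y ^ j * Real.exp y) = Real.exp y * (W n j * x ^ j) := by
      rw [hy, div_pow]
      field_simp
    rw [← hcoeff]
    exact (hasSum_pow_div_factorial_mul_descFactorial y j).mul_left _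
  refine ⟨summable_abs_iff.2 hsum.summable, ?_⟩
  rw [hsum.tsum_eq, ← mul_assoc, ← Real.exp_add, neg_add_cancel, Real.exp_zero, one_mul]
end

section
/- For nonnegative integers n ≥ k, positive integers m, r, α, we have W^{(r)}_{m,λ}(n,k) / C(k+α, k) = Σ_{l=k}^{n} [C(n,l)/C(l+α,l)] · W_{m,λ}(l+α, k+α) · B^{(α)}_{n-l}((r−1)/(mλ)) · (λm)^{n-l}, where B^{(α)}_j(x) are Bernoulli polynomials of order α. -/
open Finset PowerSeries

/-!
Put `a = mλ`. At `x = iλ` the defining expansions read `(s + i a)ⁿ = ∑_j W(n,j) aʲ i(i-1)⋯(i-j+1)`,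
and the `K`-th forward difference at `i = 0` isolates `K! a^K W(n,K)`; since the `K`-th forward
difference of `i ↦ e^{(s+ia)t}` at `0` is `e^{st}(e^{at}-1)^K`, this gives the generating function
`a^K K! ∑ₙ W(n,K) tⁿ/n! = e^{st}(e^{at}-1)^K`.
With `x = (r-1)/a`, the Bernoulli generating function rescaled by `a` says
`(e^{at}-1)^α ∑_j B^{(α)}_j(x) (at)ʲ/j! = (at)^α e^{(r-1)t}`. Multiplying the generating function of
`W(·, k+α)` (`s = 1`) by the rescaled Bernoulli series therefore gives `tᵅ` times that of
`W^{(r)}(·, k)` (`s = r`), up to the factor `k!/(k+α)!`; comparing coefficients of `tⁿ⁺ᵅ` is the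
identity.
-/

open scoped Nat fwdDiff
-- `Δ_[h] ^[n]` needs the space: `]^` is a token of the exterior power notation.

lemma ffact_natCast_mul (l : ℝ) (i K : ℕ) :
    ffact l (i * l) K = i.descFactorial K * l ^ K := by
  rw [← descPochhammer_eval_eq_descFactorial]
  induction K with
  | zero => simp [ffact]
  | succ K ih => rw [ffact, ih, descPochhammer_succ_eval]; ring

lemma pow_eq_sum_descFactorial_of_eq_sum_ffact {l s : ℝ} {m : ℕ} {W : ℕ → ℕ → ℝ}
    (hW : ∀ (n : ℕ) (x : ℝ), ((m : ℝ) * x + s) ^ n =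
      ∑ k ∈ range (n + 1), W n k * (m : ℝ) ^ k * ffact l x k) (n i : ℕ) :
    (s + i * (m * l)) ^ n = ∑ j ∈ range (n + 1), W n j * (m * l) ^ j * i.descFactorial j := by
  rw [show s + i * (m * l) = m * (i * l) + s by ring, hW]
  refine sum_congr rfl fun j _ ↦ ?_
  rw [ffact_natCast_mul]
  ring

lemma fwdDiff_iter_comp_addMonoidHom {M G H : Type*} [AddCommMonoid M] [AddCommGroup G]
    [AddCommGroup H] (h : M) (e : G →+ H) (f : M → G) (n : ℕ) (y : M) :
    Δ_[h] ^[n] (e ∘ f) y = e (Δ_[h] ^[n] f y) := by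
  simp [fwdDiff_iter_eq_sum_shift, map_zsmul]

lemma fwdDiff_iter_descFactorial_zero (j K : ℕ) :
    Δ_[1] ^[K] (fun i : ℕ ↦ (i.descFactorial j : ℝ)) 0 = if K = j then (K ! : ℝ) else 0 := by
  have h := fwdDiff_iter_comp_addMonoidHom 1
    ((AddMonoidHom.mulLeft (j ! : ℝ)).comp (Int.castAddHom ℝ)) (fun i : ℕ ↦ (i.choose j : ℤ)) K 0
  simp only [Function.comp_def, AddMonoidHom.coe_comp, AddMonoidHom.coe_mulLeft,
    Int.coe_castAddHom, fwdDiff_iter_choose_zero, Int.cast_natCast] at h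
  simp only [Nat.descFactorial_eq_factorial_mul_choose, Nat.cast_mul, h]
  split_ifs with hK <;> simp [hK]

lemma fwdDiff_iter_zero_of_eq_sum_descFactorial {f g : ℕ → ℝ} {n : ℕ}
    (hf : ∀ i, f i = ∑ j ∈ range (n + 1), g j * i.descFactorial j) (K : ℕ) :
    Δ_[1] ^[K] f 0 = if K ≤ n then g K * K ! else 0 := by
  have hf' : f = ∑ j ∈ range (n + 1), g j • fun i : ℕ ↦ (i.descFactorial j : ℝ) := by
    ext i
    simp [hf]
  simp only [hf', fwdDiff_iter_finsetSum, fwdDiff_iter_const_smul, Finset.sum_apply, Pi.smul_apply]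
  rw [sum_congr rfl fun j _ ↦ by rw [smul_eq_mul, fwdDiff_iter_descFactorial_zero]]
  simp

lemma rescale_exp_pow (a : ℝ) (i : ℕ) : rescale a (exp ℝ) ^ i = rescale (i * a) (exp ℝ) := by
  rw [← map_pow, exp_pow_eq_rescale_exp, rescale_rescale]

lemma coeff_rescale_exp (a : ℝ) (n : ℕ) : coeff n (rescale a (exp ℝ)) = a ^ n / n ! := by
  simp [coeff_rescale, div_eq_mul_inv]

lemma coeff_rescale_exp_mul_rescale_exp_sub_one_pow (s a : ℝ) (K n : ℕ) :
    coeff n (rescale s (exp ℝ) * (rescale a (exp ℝ) - 1) ^ K) * n ! =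
      Δ_[1] ^[K] (fun i : ℕ ↦ (s + i * a) ^ n) 0 := by
  rw [sub_eq_add_neg, add_pow, mul_sum, map_sum, sum_mul, fwdDiff_iter_eq_sum_shift]
  refine sum_congr rfl fun i _ ↦ ?_
  have hc : (-1 : ℝ⟦X⟧) ^ (K - i) * (K.choose i : ℝ⟦X⟧) =
      C ((-1 : ℝ) ^ (K - i) * K.choose i) := by
    simp
  rw [rescale_exp_pow, mul_assoc, hc, ← mul_assoc, exp_mul_exp_eq_exp_add, coeff_mul_C,
    coeff_rescale_exp, zsmul_eq_mul]
  simp only [zero_add, nsmul_eq_mul, mul_one]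
  push_cast
  field_simp

-- The entries `W n K` with `n < K` are not determined by the expansions, hence the cut-off.
noncomputable def columnEGF (W : ℕ → ℕ → ℝ) (K : ℕ) : ℝ⟦X⟧ :=
  mk fun n ↦ if K ≤ n then W n K / n ! else 0

lemma C_mul_columnEGF {s a : ℝ} {W : ℕ → ℕ → ℝ}
    (hW : ∀ n i : ℕ, (s + i * a) ^ n = ∑ j ∈ range (n + 1), W n j * a ^ j * i.descFactorial j)
    (K : ℕ) :
    C (a ^ K * K !) * columnEGF W K = rescale s (exp ℝ) * (rescale a (exp ℝ) - 1) ^ K := by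
  ext n
  rw [← mul_left_inj' (Nat.cast_ne_zero.mpr n.factorial_ne_zero),
    coeff_rescale_exp_mul_rescale_exp_sub_one_pow,
    fwdDiff_iter_zero_of_eq_sum_descFactorial (g := fun j ↦ W n j * a ^ j) (hW n), coeff_C_mul,
    columnEGF, coeff_mk]
  split_ifs
  · field_simp
  · simp

lemma mk_pow_div_factorial (x : ℝ) : mk (fun j ↦ x ^ j / j !) = rescale x (exp ℝ) := by
  ext j
  rw [coeff_mk, coeff_rescale_exp]

lemma rescale_exp_sub_one (a : ℝ) :
    rescale a (exp ℝ) - 1 = C a * X * rescale a (mk fun j ↦ 1 / (j + 1)!) := by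
  ext (_ | j)
  · rw [map_sub, coeff_rescale_exp, coeff_one, if_pos rfl, coeff_zero_eq_constantCoeff]
    simp
  · rw [mul_comm (C a), mul_assoc, coeff_succ_X_mul, coeff_C_mul, coeff_rescale, coeff_mk,
      map_sub, coeff_rescale_exp, coeff_one, if_neg j.succ_ne_zero, pow_succ]
    ring

lemma rescale_exp_sub_one_pow_mul {α : ℕ} {b : ℕ → ℝ} {x : ℝ}
    (hb : (mk fun j ↦ (1 : ℝ) / (j + 1)!) ^ α * mk (fun j ↦ b j / j !) =
      mk fun j ↦ x ^ j / j !) (a : ℝ) :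
    (rescale a (exp ℝ) - 1) ^ α * rescale a (mk fun j ↦ b j / j !) =
      C a ^ α * X ^ α * rescale (x * a) (exp ℝ) := by
  rw [rescale_exp_sub_one, mul_pow, mul_assoc, ← map_pow, ← map_mul, hb, mk_pow_div_factorial,
    rescale_rescale, mul_pow]

lemma X_pow_mul_mk_eq_columnEGF_add (W : ℕ → ℕ → ℝ) (k α : ℕ) :
    X ^ α * PowerSeries.mk (fun j ↦ if k ≤ j then W (j + α) (k + α) / (j + α)! else 0) =
      columnEGF W (k + α) := by
  ext n
  rw [coeff_X_pow_mul', columnEGF, coeff_mk, coeff_mk]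
  by_cases hn : α ≤ n
  · obtain ⟨j, rfl⟩ := Nat.exists_eq_add_of_le' hn
    simp
  · rw [if_neg hn, if_neg (by omega)]

lemma coeff_mk_ite_mul (f : ℕ → ℝ) (g : ℝ⟦X⟧) (k n : ℕ) :
    coeff n (mk (fun j ↦ if k ≤ j then f j else 0) * g) =
      ∑ j ∈ Icc k n, f j * coeff (n - j) g := by
  rw [coeff_mul, Nat.sum_antidiagonal_eq_sum_range_succ_mk]
  simp only [coeff_mk, ite_mul, zero_mul]
  rw [← sum_filter]
  congr 1
  ext j
  simp [and_comm]

lemma rescale_exp_sub_one_ne_zero {a : ℝ} (ha : a ≠ 0) : rescale a (exp ℝ) - 1 ≠ 0 := by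
  intro h
  exact ha (by simpa using congrArg (coeff 1) h)

lemma C_mul_columnEGF_eq_mul_rescale {a u s x : ℝ} (ha : a ≠ 0) (hs : u + x * a = s)
    {k α : ℕ} {W Wr : ℕ → ℕ → ℝ} {b : ℕ → ℝ}
    (hW : ∀ n i : ℕ, (u + i * a) ^ n = ∑ j ∈ range (n + 1), W n j * a ^ j * i.descFactorial j)
    (hWr : ∀ n i : ℕ, (s + i * a) ^ n = ∑ j ∈ range (n + 1), Wr n j * a ^ j * i.descFactorial j)
    (hb : (mk fun j ↦ (1 : ℝ) / (j + 1)!) ^ α * mk (fun j ↦ b j / j !) =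
      mk fun j ↦ x ^ j / j !) :
    C ((k ! : ℝ) / (k + α)!) * columnEGF Wr k =
      PowerSeries.mk (fun j ↦ if k ≤ j then W (j + α) (k + α) / (j + α)! else 0) *
        rescale a (mk fun j ↦ b j / j !) := by
  set G := rescale a (exp ℝ) - 1
  have hscalar : C ((k ! : ℝ) / (k + α)!) * C (a ^ (k + α) * (k + α)!) =
      C a ^ α * C (a ^ k * k !) := by
    rw [← map_mul, ← map_pow, ← map_mul]
    congr 1
    field_simp
    ring
  have hN : C (a ^ (k + α) * (k + α)!) * X ^ α * G ^ α ≠ 0 := by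
    refine mul_ne_zero (mul_ne_zero ?_ (pow_ne_zero _ X_ne_zero))
      (pow_ne_zero _ (rescale_exp_sub_one_ne_zero ha))
    rw [Ne, map_eq_zero_iff C C_injective]
    positivity
  refine mul_right_cancel₀ hN ?_
  calc C ((k ! : ℝ) / (k + α)!) * columnEGF Wr k * (C (a ^ (k + α) * (k + α)!) * X ^ α * G ^ α)
      = C a ^ α * X ^ α * G ^ α * (C (a ^ k * k !) * columnEGF Wr k) := by
        linear_combination (X ^ α * G ^ α * columnEGF Wr k) * hscalar
    _ = C a ^ α * X ^ α * G ^ α * (rescale s (exp ℝ) * G ^ k) := by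
        rw [C_mul_columnEGF hWr]
    _ = C (a ^ (k + α) * (k + α)!) * columnEGF W (k + α) *
          (C a ^ α * X ^ α * rescale (x * a) (exp ℝ)) := by
        rw [C_mul_columnEGF hW, ← hs, ← exp_mul_exp_eq_exp_add]
        ring
    _ = _ := by
        rw [← X_pow_mul_mk_eq_columnEGF_add, ← rescale_exp_sub_one_pow_mul hb]
        ring

lemma choose_div_choose_add {n j : ℕ} (hj : j ≤ n) (α : ℕ) :
    (n.choose j : ℝ) / (j + α).choose j = n ! * α ! / ((n - j)! * (j + α)!) := by
  rw [Nat.cast_choose ℝ hj, Nat.cast_choose ℝ (j.le_add_right α), Nat.add_sub_cancel_left]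
  field_simp

theorem stmt13_general (l : ℝ) (hl : l ≠ 0) (m r α : ℕ) (hm : 0 < m)
    (W Wr : ℕ → ℕ → ℝ) (B : ℕ → ℝ → ℝ)
    (hW : ∀ (n : ℕ) (x : ℝ),
      ((m : ℝ) * x + 1) ^ n = ∑ k ∈ range (n + 1), W n k * (m : ℝ) ^ k * ffact l x k)
    (hWr : ∀ (n : ℕ) (x : ℝ),
      ((m : ℝ) * x + r) ^ n = ∑ k ∈ range (n + 1), Wr n k * (m : ℝ) ^ k * ffact l x k)
    (hB : ∀ x : ℝ,
      (PowerSeries.mk fun j => (1 : ℝ) / (j + 1).factorial) ^ α *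
        PowerSeries.mk (fun j => B j x / j.factorial) =
      PowerSeries.mk fun j => x ^ j / j.factorial)
    (n k : ℕ) (hkn : k ≤ n) :
    Wr n k / ((k + α).choose k : ℝ) =
      ∑ j ∈ Icc k n, ((n.choose j : ℝ) / ((j + α).choose j : ℝ)) *
        W (j + α) (k + α) * B (n - j) (((r : ℝ) - 1) / ((m : ℝ) * l)) *
        (l * m) ^ (n - j) := by
  have ha : (m : ℝ) * l ≠ 0 := mul_ne_zero (by positivity) hl
  have hseries := C_mul_columnEGF_eq_mul_rescale ha (u := 1) (k := k) (by field_simp; ring)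
    (pow_eq_sum_descFactorial_of_eq_sum_ffact hW) (pow_eq_sum_descFactorial_of_eq_sum_ffact hWr)
    (hB (((r : ℝ) - 1) / (m * l)))
  have hcoeff := congrArg (coeff n) hseries
  rw [coeff_C_mul, columnEGF, coeff_mk, if_pos hkn, coeff_mk_ite_mul] at hcoeff
  simp only [coeff_rescale, coeff_mk] at hcoeff
  calc Wr n k / ((k + α).choose k : ℝ)
      = n ! * α ! * ((k ! / (k + α)!) * (Wr n k / n !)) := by
        rw [Nat.cast_choose ℝ (k.le_add_right α), Nat.add_sub_cancel_left]
        field_simp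
    _ = _ := by
        rw [hcoeff, mul_sum]
        refine sum_congr rfl fun j hj ↦ ?_
        rw [choose_div_choose_add (mem_Icc.1 hj).2]
        field_simp

/-- Theorem 13: identity connecting λ-analogues of Whitney-type r-Stirling numbers of the
second kind, λ-analogues of Whitney-type Stirling numbers of the second kind and values of
higher-order Bernoulli polynomials, characterized by
`((e^t - 1)/t)^α · ∑_j B^{(α)}_j(x) t^j/j! = e^{xt}`. -/
theorem stmt13 (l : ℝ) (hl : l ≠ 0) (m r α : ℕ) (hm : 0 < m) (hr : 0 < r) (hα : 0 < α)
    (W Wr : ℕ → ℕ → ℝ) (B : ℕ → ℝ → ℝ)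
    (hW : ∀ (n : ℕ) (x : ℝ),
      ((m : ℝ) * x + 1) ^ n = ∑ k ∈ range (n + 1), W n k * (m : ℝ) ^ k * ffact l x k)
    (hWr : ∀ (n : ℕ) (x : ℝ),
      ((m : ℝ) * x + r) ^ n = ∑ k ∈ range (n + 1), Wr n k * (m : ℝ) ^ k * ffact l x k)
    (hB : ∀ x : ℝ,
      (PowerSeries.mk fun j => (1 : ℝ) / (j + 1).factorial) ^ α *
        PowerSeries.mk (fun j => B j x / j.factorial) =
      PowerSeries.mk fun j => x ^ j / j.factorial)
    (n k : ℕ) (hkn : k ≤ n) :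
    Wr n k / ((k + α).choose k : ℝ) =
      ∑ j ∈ Icc k n, ((n.choose j : ℝ) / ((j + α).choose j : ℝ)) *
        W (j + α) (k + α) * B (n - j) (((r : ℝ) - 1) / ((m : ℝ) * l)) *
        (l * m) ^ (n - j) :=
  stmt13_general l hl m r α hm W Wr B hW hWr hB n k hkn
end
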